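/- Let a_i ≥ a_i' > 0 and 0 < b_i ≤ b_i' for i = 1,…,n. If the function x ↦ ∏_{i=1}^n sinh(a_i'·x)/sinh(b_i'·x) (extended by continuity at x = 0) is not positive definite, then the function x ↦ ∏_{i=1}^n sinh(a_i·x)/sinh(b_i·x) (extended by continuity at x = 0) is not positive definite. -/

import Mathlib

open scoped ComplexOrder

/-- A function `φ : ℝ → ℂ` is positive definite if for every `n`, all real numbers
`x 1, …, x n` and complex numbers `c 1, …, c n`, the sum
`∑ i j, c i * conj (c j) * φ (x i - x j)` is a nonnegative real number. -/
def IsPosDefFun (φ : ℝ → ℂ) : Prop :=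
  ∀ (n : ℕ) (x : Fin n → ℝ) (c : Fin n → ℂ),
    0 ≤ ∑ i, ∑ j, c i * (starRingEnd ℂ) (c j) * φ (x i - x j)

/-- A real-valued function is infinitely divisible if every positive real power of it
is positive definite. -/
def IsInfDivFun (φ : ℝ → ℝ) : Prop :=
  ∀ r : ℝ, 0 < r → IsPosDefFun fun x => ((φ x ^ r : ℝ) : ℂ)

/-- The function `x ↦ ∏ i, sinh (a i * x) / sinh (b i * x)`, extended by continuity
at `x = 0` (where it takes the value `∏ i, a i / b i`). -/
noncomputable def sinhProd {n : ℕ} (a b : Fin n → ℝ) (x : ℝ) : ℝ :=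
  if x = 0 then ∏ i, a i / b i else ∏ i, Real.sinh (a i * x) / Real.sinh (b i * x)

/-!
Since `sinh (a' x) / sinh (b' x)` is `sinh (a x) / sinh (b x)` times `sinh (a' x) / sinh (a x)`
and `sinh (b x) / sinh (b' x)`, and positive definite functions are closed under products (Schur
product theorem), it suffices that `sinh (c x) / sinh (d x)` is positive definite for `0 ≤ c ≤ d`.
By Euler's product for `sinh`, this ratio is the pointwise limit of `c / d` times finite products of
factors `(1 + (c x / m)²) / (1 + (d x / m)²)`. Each factor is a convex combination of `1` and the
Cauchy kernel `(1 + (d x / m)²)⁻¹`, which is positive definite as the real part of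
`∫₀^∞ e^{-s} e^{i x s} ds = (1 - i x)⁻¹`.
-/

open Finset Complex Filter MeasureTheory Topology Matrix ComplexConjugate
open scoped Real

theorem Matrix.posSemidef_of_forall_dotProduct_mulVec_nonneg {ι : Type*} [Fintype ι] [DecidableEq ι]
    {A : Matrix ι ι ℂ} (hA : ∀ v, 0 ≤ star v ⬝ᵥ A *ᵥ v) : A.PosSemidef := by
  rw [← Matrix.isPositive_toEuclideanLin_iff, LinearMap.isPositive_iff_complex]
  intro x
  have hx : 0 ≤ star (star x.ofLp ⬝ᵥ A *ᵥ x.ofLp) := star_nonneg_iff.mpr (hA x.ofLp)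
  rw [← star_dotProduct_star, star_star] at hx
  rw [EuclideanSpace.inner_eq_star_dotProduct, Matrix.ofLp_toLpLin, Matrix.toLin'_apply,
    dotProduct_comm]
  obtain ⟨hre, him⟩ := Complex.nonneg_iff.mp hx
  exact ⟨Complex.ext (by simp) (by simp [him]), hre⟩

theorem sum_sum_mul_conj_mul_eq_dotProduct_mulVec {n : ℕ} (φ : ℝ → ℂ) (x : Fin n → ℝ)
    (c : Fin n → ℂ) :
    ∑ i, ∑ j, c i * conj (c j) * φ (x i - x j) =
      c ⬝ᵥ (of fun i j => φ (x i - x j)) *ᵥ star c := by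
  simp only [dotProduct, mulVec, of_apply, Finset.mul_sum, Pi.star_apply, Complex.star_def]
  exact Finset.sum_congr rfl fun i _ => Finset.sum_congr rfl fun j _ => by ring

theorem isPosDefFun_iff_posSemidef {φ : ℝ → ℂ} :
    IsPosDefFun φ ↔ ∀ (n : ℕ) (x : Fin n → ℝ), (of fun i j => φ (x i - x j)).PosSemidef := by
  refine ⟨fun hφ n x => Matrix.posSemidef_of_forall_dotProduct_mulVec_nonneg fun v => ?_,
    fun hφ n x c => ?_⟩
  · simpa only [sum_sum_mul_conj_mul_eq_dotProduct_mulVec, star_star] using hφ n x (star v)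
  · rw [sum_sum_mul_conj_mul_eq_dotProduct_mulVec]
    simpa using (hφ n x).dotProduct_mulVec_nonneg (star c)

theorem isPosDefFun_const {r : ℝ} (hr : 0 ≤ r) : IsPosDefFun fun _ => (r : ℂ) := fun n x c => by
  change 0 ≤ ∑ i, ∑ j, c i * conj (c j) * (r : ℂ)
  simp_rw [← Finset.sum_mul, ← Finset.mul_sum]
  rw [← Finset.sum_mul, ← map_sum, Complex.mul_conj]
  exact mul_nonneg (zero_le_real.mpr (normSq_nonneg _)) (zero_le_real.mpr hr)

namespace IsPosDefFun

variable {φ ψ : ℝ → ℂ}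

theorem mul (hφ : IsPosDefFun φ) (hψ : IsPosDefFun ψ) : IsPosDefFun fun x => φ x * ψ x :=
  isPosDefFun_iff_posSemidef.mpr fun n x =>
    (isPosDefFun_iff_posSemidef.mp hφ n x).hadamard (isPosDefFun_iff_posSemidef.mp hψ n x)

theorem prod {ι : Type*} (s : Finset ι) {φ : ι → ℝ → ℂ} (hφ : ∀ i ∈ s, IsPosDefFun (φ i)) :
    IsPosDefFun fun x => ∏ i ∈ s, φ i x := by
  have hone : IsPosDefFun fun _ => 1 := by simpa using isPosDefFun_const zero_le_one
  have := Finset.prod_induction φ IsPosDefFun (fun _ _ => mul) hone hφ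
  rwa [Finset.prod_fn] at this

theorem add (hφ : IsPosDefFun φ) (hψ : IsPosDefFun ψ) : IsPosDefFun fun x => φ x + ψ x :=
  fun n x c => by
    simpa only [mul_add, Finset.sum_add_distrib] using add_nonneg (hφ n x c) (hψ n x c)

theorem star (hφ : IsPosDefFun φ) : IsPosDefFun fun x => star (φ x) := fun n x c => by
  simpa [map_sum, Complex.star_def] using star_nonneg_iff.mpr (hφ n x fun i => conj (c i))

theorem re (hφ : IsPosDefFun φ) : IsPosDefFun fun x => ((φ x).re : ℂ) := by
  simpa [Complex.re_eq_add_conj, div_eq_inv_mul] using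
    (isPosDefFun_const (inv_nonneg.mpr zero_le_two)).mul (hφ.add hφ.star)

theorem comp_mul (hφ : IsPosDefFun φ) (w : ℝ) : IsPosDefFun fun x => φ (w * x) := fun n x c => by
  simpa [mul_sub] using hφ n (fun i => w * x i) c

theorem of_tendsto {ι : Type*} {l : Filter ι} [l.NeBot] {F : ι → ℝ → ℂ}
    (hF : ∀ i, IsPosDefFun (F i)) (hlim : ∀ x, Tendsto (fun i => F i x) l (𝓝 (φ x))) :
    IsPosDefFun φ := fun n x c =>
  ge_of_tendsto' (tendsto_finsetSum _ fun _ _ => tendsto_finsetSum _ fun _ _ =>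
    (hlim _).const_mul _) fun i => hF i n x c

theorem integral {α : Type*} [MeasurableSpace α] {μ : Measure α} {F : α → ℝ → ℂ}
    (hF : ∀ s, IsPosDefFun (F s)) (hint : ∀ x, Integrable (F · x) μ) :
    IsPosDefFun fun x => ∫ s, F s x ∂μ := fun n x c => by
  simp_rw [← integral_const_mul, ← integral_finsetSum _ fun _ _ => (hint _).const_mul _]
  rw [← integral_finsetSum _ fun _ _ => integrable_finsetSum _ fun _ _ => (hint _).const_mul _]
  exact integral_nonneg fun s => hF s n x c

end IsPosDefFun

theorem isPosDefFun_exp_mul_I (s : ℝ) : IsPosDefFun fun x => exp (x * s * I) := fun n x c => by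
  convert isPosDefFun_const zero_le_one n x (fun i => c i * exp (x i * s * I)) using 3 with i _ j _
  rw [map_mul, ← Complex.exp_conj]
  simp only [map_mul, Complex.conj_ofReal, Complex.conj_I, Complex.ofReal_one, mul_one]
  rw [show ((x i - x j : ℝ) : ℂ) * s * I = x i * s * I + x j * s * -I by push_cast; ring,
    Complex.exp_add]
  ring

theorem exp_neg_mul_exp_mul_I (x s : ℝ) :
    (Real.exp (-s) : ℂ) * exp (x * s * I) = exp ((-1 + x * I) * s) := by
  rw [Complex.ofReal_exp, ← Complex.exp_add]
  push_cast
  ring_nf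

theorem integral_exp_neg_mul_exp_mul_I (x : ℝ) :
    ∫ s in Set.Ioi (0 : ℝ), (Real.exp (-s) : ℂ) * exp (x * s * I) = (1 - x * I)⁻¹ := by
  simp_rw [exp_neg_mul_exp_mul_I]
  rw [integral_exp_mul_complex_Ioi (by simp), show (-1 + x * I : ℂ) = -(1 - x * I) by ring,
    Complex.ofReal_zero, mul_zero, Complex.exp_zero, neg_div_neg_eq, one_div]

theorem isPosDefFun_inv_one_add_sq : IsPosDefFun fun x => (((1 + x ^ 2)⁻¹ : ℝ) : ℂ) := by
  have hint (x : ℝ) :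
      IntegrableOn (fun s : ℝ => (Real.exp (-s) : ℂ) * exp (x * s * I)) (Set.Ioi 0) := by
    simpa only [exp_neg_mul_exp_mul_I] using integrableOn_exp_mul_complex_Ioi (by simp) 0
  have h := (IsPosDefFun.integral (μ := volume.restrict (Set.Ioi 0)) (fun s =>
    (isPosDefFun_const (Real.exp_pos (-s)).le).mul (isPosDefFun_exp_mul_I s)) hint).re
  simp only [integral_exp_neg_mul_exp_mul_I] at h
  convert h using 3 with x
  simp [Complex.inv_re, Complex.normSq, sq]

theorem isPosDefFun_one_add_sq_div_one_add_sq {c d : ℝ} (hcd : c ^ 2 ≤ d ^ 2) :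
    IsPosDefFun fun x => (((1 + (c * x) ^ 2) / (1 + (d * x) ^ 2) : ℝ) : ℂ) := by
  have hr : (c / d) ^ 2 ≤ 1 := by
    rw [div_pow]
    exact div_le_one_of_le₀ hcd (sq_nonneg d)
  have hc : c ^ 2 = (c / d) ^ 2 * d ^ 2 := by
    rcases eq_or_ne d 0 with rfl | hd
    · simpa using hcd
    · rw [div_pow, div_mul_cancel₀ _ (pow_ne_zero 2 hd)]
  have key (x : ℝ) : (1 + (c * x) ^ 2) / (1 + (d * x) ^ 2) =
      (c / d) ^ 2 + (1 - (c / d) ^ 2) * (1 + (d * x) ^ 2)⁻¹ := by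
    field_simp
    linear_combination x ^ 2 * hc
  simp only [key, Complex.ofReal_add, Complex.ofReal_mul]
  exact (isPosDefFun_const (sq_nonneg _)).add
    ((isPosDefFun_const (sub_nonneg.mpr hr)).mul (isPosDefFun_inv_one_add_sq.comp_mul d))

theorem Real.tendsto_euler_sinh_prod (t : ℝ) :
    Tendsto (fun N => t * ∏ k ∈ range N, (1 + (t / (π * (k + 1))) ^ 2)) atTop (𝓝 (sinh t)) := by
  have hπ : (π : ℂ) ≠ 0 := Complex.ofReal_ne_zero.mpr Real.pi_ne_zero
  have h : Tendsto (fun N => ((t * ∏ k ∈ range N, (1 + (t / (π * (k + 1))) ^ 2) : ℝ) : ℂ) * I)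
      atTop (𝓝 ((sinh t : ℂ) * I)) := by
    convert Complex.tendsto_euler_sin_prod (t * I / π) using 2 with N
    · push_cast
      rw [mul_div_cancel₀ _ hπ, mul_right_comm]
      congr 1
      refine prod_congr rfl fun k _ => ?_
      rw [div_pow, div_pow, mul_pow, mul_pow, I_sq]
      field_simp
      ring
    · rw [mul_div_cancel₀ _ hπ, Complex.sin_mul_I, Complex.ofReal_sinh]
  simpa only [Function.comp_def, Complex.mul_I_im, Complex.ofReal_re] using
    (Complex.continuous_im.tendsto _).comp h

noncomputable def sinhRatio (c d x : ℝ) : ℝ :=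
  if x = 0 then c / d else Real.sinh (c * x) / Real.sinh (d * x)

theorem sinhProd_eq_prod_sinhRatio {n : ℕ} (a b : Fin n → ℝ) (x : ℝ) :
    sinhProd a b x = ∏ i, sinhRatio (a i) (b i) x := by
  by_cases hx : x = 0 <;> simp [sinhProd, sinhRatio, hx]

theorem sinhRatio_mul_sinhRatio {a b c : ℝ} (hb : b ≠ 0) (x : ℝ) :
    sinhRatio a b x * sinhRatio b c x = sinhRatio a c x := by
  by_cases hx : x = 0
  · simp only [sinhRatio, hx, if_true]
    field_simp
  · have : Real.sinh (b * x) ≠ 0 := by simp [hb, hx]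
    simp only [sinhRatio, hx, if_false]
    field_simp

theorem tendsto_sinhRatio {c d : ℝ} (hd : d ≠ 0) (x : ℝ) :
    Tendsto (fun N => c / d * ∏ k ∈ range N,
        (1 + (c / (π * (k + 1)) * x) ^ 2) / (1 + (d / (π * (k + 1)) * x) ^ 2))
      atTop (𝓝 (sinhRatio c d x)) := by
  by_cases hx : x = 0
  · simp [sinhRatio, hx]
  have hdx : Real.sinh (d * x) ≠ 0 := by simp [hd, hx]
  rw [sinhRatio, if_neg hx]
  refine ((Real.tendsto_euler_sinh_prod (c * x)).div (Real.tendsto_euler_sinh_prod (d * x))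
    hdx).congr fun N => ?_
  have : ∏ k ∈ range N, (1 + (d * x / (π * (k + 1))) ^ 2) ≠ 0 :=
    prod_ne_zero_iff.mpr fun k _ => by positivity
  simp only [Pi.div_apply, div_mul_eq_mul_div _ _ x, prod_div_distrib]
  field_simp

theorem isPosDefFun_sinhRatio {c d : ℝ} (hc : 0 ≤ c) (hcd : c ≤ d) :
    IsPosDefFun fun x => ((sinhRatio c d x : ℝ) : ℂ) := by
  rcases eq_or_ne d 0 with rfl | hd
  · obtain rfl : c = 0 := le_antisymm hcd hc
    simpa [sinhRatio] using isPosDefFun_const le_rfl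
  refine IsPosDefFun.of_tendsto (F := fun N x => ((c / d * ∏ k ∈ range N,
    (1 + (c / (π * (k + 1)) * x) ^ 2) / (1 + (d / (π * (k + 1)) * x) ^ 2) : ℝ) : ℂ))
    (fun N => ?_) fun x => (Complex.continuous_ofReal.tendsto _).comp (tendsto_sinhRatio hd x)
  simp only [Complex.ofReal_mul, Complex.ofReal_prod]
  refine (isPosDefFun_const (div_nonneg hc (hc.trans hcd))).mul
    (IsPosDefFun.prod _ fun k _ => isPosDefFun_one_add_sq_div_one_add_sq ?_)
  gcongr

theorem sinhProd_not_posdef_mono {n : ℕ} (a a' b b' : Fin n → ℝ)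
    (ha' : ∀ i, 0 < a' i) (haa' : ∀ i, a' i ≤ a i)
    (hb : ∀ i, 0 < b i) (hbb' : ∀ i, b i ≤ b' i)
    (h : ¬ IsPosDefFun fun x => ((sinhProd a' b' x : ℝ) : ℂ)) :
    ¬ IsPosDefFun fun x => ((sinhProd a b x : ℝ) : ℂ) := by
  intro H
  apply h
  have hfactor (x : ℝ) (i : Fin n) : sinhRatio (a' i) (b' i) x =
      sinhRatio (a i) (b i) x * (sinhRatio (a' i) (a i) x * sinhRatio (b i) (b' i) x) := by
    rw [mul_left_comm, ← mul_assoc, sinhRatio_mul_sinhRatio ((ha' i).trans_le (haa' i)).ne',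
      sinhRatio_mul_sinhRatio (hb i).ne']
  have hsplit : (fun x => ((sinhProd a' b' x : ℝ) : ℂ)) = fun x => ((sinhProd a b x : ℝ) : ℂ) *
      ∏ i, ((sinhRatio (a' i) (a i) x * sinhRatio (b i) (b' i) x : ℝ) : ℂ) := by
    funext x
    rw [sinhProd_eq_prod_sinhRatio, sinhProd_eq_prod_sinhRatio,
      prod_congr rfl fun i _ => hfactor x i, prod_mul_distrib]
    push_cast
    rfl
  rw [hsplit]
  refine H.mul (IsPosDefFun.prod _ fun i _ => ?_)
  simpa only [Complex.ofReal_mul] using (isPosDefFun_sinhRatio (ha' i).le (haa' i)).mul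
    (isPosDefFun_sinhRatio (hb i).le (hbb' i))
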